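/- arXiv:2603.03114 — 4 statements merged into one kernel-verified Lean document; each statement's English description precedes it below -/
import Mathlib

section
/- Let U be a banded unitary operator on ℓ²(ℤ) that admits an orthonormal basis (φ_j)_{j≥1} of ℓ²(ℤ) consisting of eigenvectors of U such that every φ_j belongs to D(X). Then for every ψ ∈ D(X), one has U^t ψ ∈ D(X) for all t ∈ ℕ and lim_{t→∞} (1/t²)·‖X U^t ψ‖² = 0. -/
/-!
Since `U` is banded, the commutator `[X, U]` is bounded, say by `C`, so transport is at most
ballistic: `‖X Uᵗ ψ‖ ≤ ‖X ψ‖ + t C ‖ψ‖`. On a finite combination `v` of the eigenvectors `φ j`,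
`Uᵗ` only rotates the phases of the coefficients, so `‖X Uᵗ v‖` stays bounded in `t`. Splitting
`ψ = v + (ψ - v)` with `C ‖ψ - v‖ ≤ ε` gives `‖X Uᵗ ψ‖ ≤ A + ε t`, hence `‖X Uᵗ ψ‖ / t → 0`.
-/

open scoped ENNReal ComplexConjugate Classical
open Filter MeasureTheory

noncomputable section

abbrev l2Z : Type := lp (fun _ : ℤ => ℂ) 2

/-- The standard basis vector `δ_n` of `ℓ²(ℤ)`. -/
def deltaVec (n : ℤ) : l2Z := lp.single 2 n 1

/-- Membership in the domain of the position operator `X`. -/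
def InDomX (ψ : l2Z) : Prop := Memℓp (fun n : ℤ => (n : ℂ) * ψ n) 2

/-- The position operator `X`, defined (with junk value `0` off its domain). -/
def posX (ψ : l2Z) : l2Z :=
  if h : InDomX ψ then (⟨fun n : ℤ => (n : ℂ) * ψ n, h⟩ : l2Z) else 0

/-- A bounded operator on `ℓ²(ℤ)` is banded if its matrix elements vanish far from the
diagonal. -/
def Banded (U : l2Z →L[ℂ] l2Z) : Prop :=
  ∃ R : ℝ, 0 < R ∧ ∀ n m : ℤ, R < |(n : ℝ) - (m : ℝ)| →
    (inner ℂ (deltaVec n) (U (deltaVec m)) : ℂ) = 0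

/-- `‖X ψ‖²`, computed as an extended real (possibly `+∞`). -/
def XnormSq (ψ : l2Z) : ℝ≥0∞ := ∑' n : ℤ, ENNReal.ofReal ((n : ℝ) ^ 2 * ‖ψ n‖ ^ 2)

open Topology

lemma inner_deltaVec_left (v : l2Z) (n : ℤ) : inner ℂ (deltaVec n) v = v n := by
  simp [deltaVec, lp.inner_single_left]

lemma norm_deltaVec (n : ℤ) : ‖deltaVec n‖ = 1 := by
  simp [deltaVec, lp.norm_single]

lemma norm_apply_deltaVec_le (U : l2Z →L[ℂ] l2Z) (m n : ℤ) : ‖U (deltaVec m) n‖ ≤ ‖U‖ :=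
  calc ‖U (deltaVec m) n‖ ≤ ‖U (deltaVec m)‖ := lp.norm_apply_le_norm two_ne_zero _ n
    _ ≤ ‖U‖ := by simpa [norm_deltaVec] using U.le_opNorm (deltaVec m)

lemma Banded.exists_nat_width {U : l2Z →L[ℂ] l2Z} (hband : Banded U) :
    ∃ K : ℕ, ∀ n d : ℤ, (K : ℤ) < |d| → U (deltaVec (n + d)) n = 0 := by
  obtain ⟨R, -, hR⟩ := hband
  refine ⟨⌈R⌉₊, fun n d hd => ?_⟩
  rw [← inner_deltaVec_left]
  refine hR n (n + d) ((Nat.le_ceil R).trans_lt ?_)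
  push_cast
  rw [sub_add_cancel_left, abs_neg]
  exact_mod_cast hd

lemma apply_eq_sum_Icc_of_band {U : l2Z →L[ℂ] l2Z} {K : ℕ}
    (hK : ∀ n d : ℤ, (K : ℤ) < |d| → U (deltaVec (n + d)) n = 0) (χ : l2Z) (n : ℤ) :
    U χ n = ∑ d ∈ Finset.Icc (-(K : ℤ)) K, U (deltaVec (n + d)) n * χ (n + d) := by
  have hχ : HasSum (fun m => U (deltaVec m) n * χ m) (U χ n) := by
    have := ((lp.hasSum_single ENNReal.ofNat_ne_top χ).mapL U).mapL (lp.evalCLM ℂ _ 2 n)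
    refine this.congr_fun fun m => ?_
    have hsingle : lp.single 2 m (χ m) = χ m • deltaVec m := by
      rw [deltaVec, ← lp.single_smul, smul_eq_mul, mul_one]
    simp [hsingle, lp.evalCLM, mul_comm]
  rw [← (Equiv.addLeft n).hasSum_iff] at hχ
  refine hχ.unique (hasSum_sum_of_ne_finset_zero fun d hd => ?_)
  rw [Finset.mem_Icc, ← abs_le, not_le] at hd
  simp [hK n d hd]

lemma inDomX_zero : InDomX 0 := by
  simpa [InDomX] using zero_mem_ℓp' (E := fun _ : ℤ => ℂ) (p := 2)

lemma InDomX.add {ψ χ : l2Z} (hψ : InDomX ψ) (hχ : InDomX χ) : InDomX (ψ + χ) := by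
  unfold InDomX
  convert Memℓp.add hψ hχ using 1
  ext n
  simp [mul_add]

lemma InDomX.smul {ψ : l2Z} (hψ : InDomX ψ) (c : ℂ) : InDomX (c • ψ) := by
  simpa [InDomX, mul_left_comm] using hψ.const_mul c

lemma InDomX.sub {ψ χ : l2Z} (hψ : InDomX ψ) (hχ : InDomX χ) : InDomX (ψ - χ) := by
  simpa [sub_eq_add_neg] using hψ.add (hχ.smul (-1))

lemma posX_apply {ψ : l2Z} (hψ : InDomX ψ) (n : ℤ) : posX ψ n = n * ψ n := by
  rw [posX, dif_pos hψ]

lemma posX_add {ψ χ : l2Z} (hψ : InDomX ψ) (hχ : InDomX χ) :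
    posX (ψ + χ) = posX ψ + posX χ := by
  ext n
  simp [posX_apply, hψ, hχ, hψ.add hχ, mul_add]

lemma posX_smul {ψ : l2Z} (hψ : InDomX ψ) (c : ℂ) : posX (c • ψ) = c • posX ψ := by
  ext n
  simp [posX_apply, hψ, hψ.smul c, mul_left_comm]

lemma exists_lp_mul_translate {c : ℤ → ℂ} {B : ℝ} (hc : ∀ n, ‖c n‖ ≤ B) (ψ : l2Z) (d : ℤ) :
    ∃ r : l2Z, (∀ n, r n = c n * ψ (n + d)) ∧ ‖r‖ ≤ B * ‖ψ‖ := by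
  have hp : 0 < (2 : ℝ≥0∞).toReal := by norm_num
  have hτ : Memℓp (fun n => ψ (n + d)) 2 := (memℓp_gen_iff hp).2 <|
    (Equiv.addRight d).summable_iff.2 ((lp.memℓp ψ).summable hp)
  let τ : l2Z := ⟨_, hτ⟩
  have hτψ : ‖τ‖ = ‖ψ‖ := by
    rw [lp.norm_eq_tsum_rpow hp, lp.norm_eq_tsum_rpow hp]
    exact congrArg (· ^ _) ((Equiv.addRight d).tsum_eq fun n => ‖ψ n‖ ^ (2 : ℝ≥0∞).toReal)
  have hB : 0 ≤ B := (norm_nonneg _).trans (hc 0)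
  have hr : Memℓp (fun n => c n * ψ (n + d)) 2 :=
    (hτ.norm.const_mul B).mono fun n => by
      rw [norm_mul]; gcongr; exact hc n
  refine ⟨⟨_, hr⟩, fun n => rfl, ?_⟩
  calc ‖(⟨_, hr⟩ : l2Z)‖ ≤ ‖(B : ℂ) • τ‖ := lp.norm_mono two_ne_zero fun n => by
        simp only [lp.coeFn_smul, Pi.smul_apply, smul_eq_mul, norm_mul, Complex.norm_real,
          Real.norm_of_nonneg hB]
        gcongr; exact hc n
    _ = B * ‖ψ‖ := by rw [norm_smul, Complex.norm_real, Real.norm_of_nonneg hB, hτψ]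

def CommutatorBound (U : l2Z →L[ℂ] l2Z) (C : ℝ) : Prop :=
  ∀ ψ, InDomX ψ → InDomX (U ψ) ∧ ‖posX (U ψ) - U (posX ψ)‖ ≤ C * ‖ψ‖

lemma Banded.exists_commutator_bound {U : l2Z →L[ℂ] l2Z} (hband : Banded U) :
    ∃ C, 0 ≤ C ∧ CommutatorBound U C := by
  obtain ⟨K, hK⟩ := hband.exists_nat_width
  set W := Finset.Icc (-(K : ℤ)) K
  refine ⟨(2 * K + 1) * (K * ‖U‖), by positivity, fun ψ hψ => ?_⟩
  choose r hr hr_le using fun d : ℤ =>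
    exists_lp_mul_translate (c := fun n => -(d : ℂ) * U (deltaVec (n + d)) n)
      (B := ‖(d : ℂ)‖ * ‖U‖)
      (fun n => by rw [norm_mul, norm_neg]; gcongr; exact norm_apply_deltaVec_le U _ n) ψ d
  -- write `n = (n + d) - d` in the band sum for `(Uψ)(n)`
  have hcomm : (fun n : ℤ => (n : ℂ) * U ψ n) = ⇑(U (posX ψ) + ∑ d ∈ W, r d) := by
    ext n
    simp only [lp.coeFn_add, lp.coeFn_sum, Pi.add_apply, Finset.sum_apply, hr]
    rw [apply_eq_sum_Icc_of_band hK, apply_eq_sum_Icc_of_band hK]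
    simp only [posX_apply hψ, Finset.mul_sum]
    rw [← Finset.sum_add_distrib]
    refine Finset.sum_congr rfl fun d _ => ?_
    push_cast
    ring
  have hUψ : InDomX (U ψ) := by
    rw [InDomX, hcomm]
    exact lp.memℓp _
  refine ⟨hUψ, ?_⟩
  have hposX : posX (U ψ) = U (posX ψ) + ∑ d ∈ W, r d := by
    ext n
    rw [posX_apply hUψ]
    exact congrFun hcomm n
  have hnorm_d : ∀ d ∈ W, ‖r d‖ ≤ K * ‖U‖ * ‖ψ‖ := fun d hd => by
    refine (hr_le d).trans ?_
    gcongr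
    rw [Complex.norm_intCast, ← Int.cast_abs, ← Int.cast_natCast]
    exact_mod_cast abs_le.2 (Finset.mem_Icc.1 hd)
  have hcard : (W.card : ℝ) = 2 * K + 1 := by
    rw [Int.card_Icc, show ((K : ℤ) + 1 - -K).toNat = 2 * K + 1 by omega]
    push_cast
    ring
  calc ‖posX (U ψ) - U (posX ψ)‖ = ‖∑ d ∈ W, r d‖ := by rw [hposX, add_sub_cancel_left]
    _ ≤ W.card • (K * ‖U‖ * ‖ψ‖) := (norm_sum_le _ _).trans (Finset.sum_le_card_nsmul _ _ _ hnorm_d)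
    _ = (2 * K + 1) * (K * ‖U‖) * ‖ψ‖ := by rw [nsmul_eq_mul, hcard]; ring

def dynLocalized (U : l2Z →L[ℂ] l2Z) : Submodule ℂ l2Z where
  carrier := {v | ∃ B, ∀ t : ℕ, InDomX ((U ^ t) v) ∧ ‖posX ((U ^ t) v)‖ ≤ B}
  zero_mem' := ⟨‖posX 0‖, fun t => by simpa using inDomX_zero⟩
  add_mem' := by
    rintro v w ⟨B, hB⟩ ⟨B', hB'⟩
    refine ⟨B + B', fun t => ?_⟩
    obtain ⟨hv, hvB⟩ := hB t
    obtain ⟨hw, hwB⟩ := hB' t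
    rw [map_add, posX_add hv hw]
    exact ⟨hv.add hw, (norm_add_le _ _).trans (add_le_add hvB hwB)⟩
  smul_mem' := by
    rintro c v ⟨B, hB⟩
    refine ⟨‖c‖ * B, fun t => ?_⟩
    obtain ⟨hv, hvB⟩ := hB t
    rw [map_smul, posX_smul hv, norm_smul]
    exact ⟨hv.smul c, by gcongr⟩

lemma inDomX_pow_apply_and_norm_posX_le {U : l2Z →L[ℂ] l2Z}
    (hU : U ∈ unitary (l2Z →L[ℂ] l2Z)) {C : ℝ}
    (hC : CommutatorBound U C)
    {ψ : l2Z} (hψ : InDomX ψ) (t : ℕ) :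
    InDomX ((U ^ t) ψ) ∧ ‖posX ((U ^ t) ψ)‖ ≤ ‖posX ψ‖ + t * C * ‖ψ‖ := by
  induction t with
  | zero => simpa using hψ
  | succ t ih =>
    obtain ⟨hdom, hcomm⟩ := hC _ ih.1
    rw [pow_succ', mul_apply_eq_comp]
    refine ⟨hdom, ?_⟩
    rw [(U ^ t).norm_map_of_mem_unitary (pow_mem hU t)] at hcomm
    calc ‖posX (U ((U ^ t) ψ))‖
        ≤ ‖U (posX ((U ^ t) ψ))‖ + ‖posX (U ((U ^ t) ψ)) - U (posX ((U ^ t) ψ))‖ :=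
          norm_le_insert' _ _
      _ ≤ (‖posX ψ‖ + t * C * ‖ψ‖) + C * ‖ψ‖ := by
          rw [U.norm_map_of_mem_unitary hU]; gcongr; exact ih.2
      _ = ‖posX ψ‖ + (t + 1 : ℕ) * C * ‖ψ‖ := by push_cast; ring

lemma mem_dynLocalized_of_apply_eq_smul {U : l2Z →L[ℂ] l2Z} (hU : U ∈ unitary (l2Z →L[ℂ] l2Z))
    {v : l2Z} {z : ℂ} (hv : U v = z • v) (hvX : InDomX v) : v ∈ dynLocalized U := by
  refine ⟨‖posX v‖, fun t => ?_⟩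
  have hpow : (U ^ t) v = z ^ t • v := by
    induction t with
    | zero => simp
    | succ t ih => rw [pow_succ', mul_apply_eq_comp, ih, map_smul, hv, smul_smul, pow_succ]
  rcases eq_or_ne v 0 with rfl | hv0
  · simpa using inDomX_zero
  have hz : ‖z‖ = 1 := by
    have := U.norm_map_of_mem_unitary hU v
    rwa [hv, norm_smul, mul_eq_right₀ (norm_ne_zero_iff.2 hv0)] at this
  rw [hpow, posX_smul hvX, norm_smul, norm_pow, hz, one_pow, one_mul]
  exact ⟨hvX.smul _, le_rfl⟩

lemma exists_norm_posX_pow_apply_le_add_mul {U : l2Z →L[ℂ] l2Z}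
    (hU : U ∈ unitary (l2Z →L[ℂ] l2Z)) {C : ℝ} (hC0 : 0 ≤ C)
    (hC : CommutatorBound U C)
    (hdense : Dense (dynLocalized U : Set l2Z)) {ψ : l2Z} (hψ : InDomX ψ) {ε : ℝ} (hε : 0 < ε) :
    ∃ A, ∀ t : ℕ, ‖posX ((U ^ t) ψ)‖ ≤ A + ε * t := by
  obtain ⟨v, ⟨B, hB⟩, hv⟩ := hdense.exists_dist_lt ψ (div_pos hε (by linarith : 0 < C + 1))
  have hw : InDomX (ψ - v) := hψ.sub (by simpa using (hB 0).1)
  have hCw : C * ‖ψ - v‖ ≤ ε := by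
    rw [dist_eq_norm, lt_div_iff₀ (by linarith)] at hv
    nlinarith [norm_nonneg (ψ - v)]
  refine ⟨B + ‖posX (ψ - v)‖, fun t => ?_⟩
  obtain ⟨hvt, hvB⟩ := hB t
  obtain ⟨hwt, hwB⟩ := inDomX_pow_apply_and_norm_posX_le hU hC hw t
  calc ‖posX ((U ^ t) ψ)‖ = ‖posX ((U ^ t) v) + posX ((U ^ t) (ψ - v))‖ := by
        rw [← posX_add hvt hwt, ← map_add, add_sub_cancel]
    _ ≤ B + (‖posX (ψ - v)‖ + t * C * ‖ψ - v‖) := (norm_add_le _ _).trans (add_le_add hvB hwB)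
    _ ≤ B + ‖posX (ψ - v)‖ + ε * t := by nlinarith [(Nat.cast_nonneg t : (0 : ℝ) ≤ t)]

lemma tendsto_div_natCast_nhds_zero_of_forall_le_add_mul {f : ℕ → ℝ} (hf : ∀ t, 0 ≤ f t)
    (h : ∀ ε > 0, ∃ A, ∀ t, f t ≤ A + ε * t) : Tendsto (fun t => f t / t) atTop (𝓝 0) := by
  rw [Metric.tendsto_atTop]
  intro ε hε
  obtain ⟨A, hA⟩ := h (ε / 2) (half_pos hε)
  obtain ⟨N, hN⟩ := eventually_atTop.1 <|
    (tendsto_const_div_atTop_nhds_zero_nat A).eventually (gt_mem_nhds (half_pos hε))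
  refine ⟨N + 1, fun t ht => ?_⟩
  have ht0 : (0 : ℝ) < t := by exact_mod_cast (by omega : 0 < t)
  have hAt := hN t (by omega)
  rw [div_lt_iff₀ ht0] at hAt
  rw [Real.dist_0_eq_abs, abs_of_nonneg (div_nonneg (hf t) ht0.le), div_lt_iff₀ ht0]
  linarith [hA t]

theorem stmt_0_general
    (U : l2Z →L[ℂ] l2Z) (hU : U ∈ unitary (l2Z →L[ℂ] l2Z)) (hband : Banded U)
    (φ : ℕ → l2Z)
    (hcomplete : (Submodule.span ℂ (Set.range φ)).topologicalClosure = ⊤)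
    (heig : ∀ j, ∃ z : ℂ, U (φ j) = z • φ j)
    (hdom : ∀ j, InDomX (φ j))
    (ψ : l2Z) (hψ : InDomX ψ) :
    (∀ t : ℕ, InDomX ((U ^ t) ψ)) ∧
      Tendsto (fun t : ℕ => (1 / (t : ℝ) ^ 2) * ‖posX ((U ^ t) ψ)‖ ^ 2)
        atTop (nhds 0) := by
  obtain ⟨C, hC0, hC⟩ := hband.exists_commutator_bound
  have hspan : Submodule.span ℂ (Set.range φ) ≤ dynLocalized U := by
    refine Submodule.span_le.2 (Set.range_subset_iff.2 fun j => ?_)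
    obtain ⟨z, hz⟩ := heig j
    exact mem_dynLocalized_of_apply_eq_smul hU hz (hdom j)
  have hdense : Dense (dynLocalized U : Set l2Z) :=
    (Submodule.dense_iff_topologicalClosure_eq_top.2 hcomplete).mono hspan
  refine ⟨fun t => (inDomX_pow_apply_and_norm_posX_le hU hC hψ t).1, ?_⟩
  have hlin := tendsto_div_natCast_nhds_zero_of_forall_le_add_mul (fun t => norm_nonneg _)
    fun ε hε => exists_norm_posX_pow_apply_le_add_mul hU hC0 hC hdense hψ hε
  have hsq := hlin.pow 2
  rw [zero_pow two_ne_zero] at hsq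
  refine hsq.congr fun t => ?_
  rw [div_pow, one_div_mul_eq_div]

/-- If `U` is a banded unitary operator on `ℓ²(ℤ)` admitting an orthonormal
basis of eigenvectors all belonging to `D(X)`, then for every `ψ ∈ D(X)` one has
`Uᵗψ ∈ D(X)` for all `t` and `(1/t²)·‖X Uᵗ ψ‖² → 0` as `t → ∞`. -/
theorem stmt_0
    (U : l2Z →L[ℂ] l2Z) (hU : U ∈ unitary (l2Z →L[ℂ] l2Z)) (hband : Banded U)
    (φ : ℕ → l2Z) (hON : Orthonormal ℂ φ)
    (hcomplete : (Submodule.span ℂ (Set.range φ)).topologicalClosure = ⊤)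
    (heig : ∀ j, ∃ z : ℂ, U (φ j) = z • φ j)
    (hdom : ∀ j, InDomX (φ j))
    (ψ : l2Z) (hψ : InDomX ψ) :
    (∀ t : ℕ, InDomX ((U ^ t) ψ)) ∧
      Tendsto (fun t : ℕ => (1 / (t : ℝ) ^ 2) * ‖posX ((U ^ t) ψ)‖ ^ 2)
        atTop (nhds 0) :=
  stmt_0_general U hU hband φ hcomplete heig hdom ψ hψ

end
end

section
/- Let H be a Hilbert space, P : H → H an orthogonal projection, U : H → H a unitary operator, and let δ = φ + ψ be a unit vector with ⟨φ, ψ⟩ = 0. Then for every positive integer T, (1/T) Σ_{t=T}^{2T−1} ‖(1 − P) U^t δ‖² ≥ ‖ψ‖² − 3·( (1/T) Σ_{t=T}^{2T−1} ‖P U^t ψ‖² )^{1/2}. -/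
/-!
Since `P` is an orthogonal projection and `Uᵗ` an isometry, `‖(1 - P)Uᵗδ‖² = 1 - ‖PUᵗδ‖²`, and
`‖PUᵗδ‖ ≤ ‖φ‖ + ‖PUᵗψ‖`. Expanding the square and using `‖φ‖, ‖PUᵗψ‖ ≤ 1` together with
`‖φ‖² + ‖ψ‖² = 1` gives the pointwise bound `‖(1 - P)Uᵗδ‖² ≥ ‖ψ‖² - 3‖PUᵗψ‖`. Averaging over
`T ≤ t < 2T` and bounding the mean of `‖PUᵗψ‖` by the root mean square (Cauchy–Schwarz) concludes.
-/

open Finset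

theorem Finset.sum_div_card_le_sqrt_sum_sq_div_card {ι : Type*} (s : Finset ι) (f : ι → ℝ) :
    (∑ i ∈ s, f i) / #s ≤ √((∑ i ∈ s, f i ^ 2) / #s) :=
  Real.le_sqrt_of_sq_le sum_div_card_sq_le_sum_sq_div_card

namespace IsStarProjection

variable {𝕜 E : Type*} [RCLike 𝕜] [NormedAddCommGroup E] [InnerProductSpace 𝕜 E] [CompleteSpace E]
  {P : E →L[𝕜] E}

theorem norm_sq_add_norm_one_sub_sq (hP : IsStarProjection P) (x : E) :
    ‖P x‖ ^ 2 + ‖(1 - P) x‖ ^ 2 = ‖x‖ ^ 2 := by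
  have hker : P ((1 - P) x) = 0 := by
    simpa using congr($(hP.mul_one_sub_self) x)
  have horth : inner 𝕜 (P x) ((1 - P) x) = 0 := by
    rw [← ContinuousLinearMap.adjoint_inner_right, hP.isSelfAdjoint.adjoint_eq, hker,
      inner_zero_right]
  simpa [sq] using (norm_add_sq_eq_norm_sq_add_norm_sq_of_inner_eq_zero _ _ horth).symm

theorem norm_apply_le (hP : IsStarProjection P) (x : E) : ‖P x‖ ≤ ‖x‖ := by
  have := hP.norm_sq_add_norm_one_sub_sq x
  nlinarith [norm_nonneg (P x), norm_nonneg x, norm_nonneg ((1 - P) x)]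

theorem norm_sq_sub_three_mul_le_norm_one_sub_apply_add_sq (hP : IsStarProjection P) {u v : E}
    (huv : inner 𝕜 u v = 0) (hunit : ‖u + v‖ = 1) :
    ‖v‖ ^ 2 - 3 * ‖P v‖ ≤ ‖(1 - P) (u + v)‖ ^ 2 := by
  have hsplit : ‖u‖ ^ 2 + ‖v‖ ^ 2 = 1 := by
    simpa [sq, hunit] using (norm_add_sq_eq_norm_sq_add_norm_sq_of_inner_eq_zero u v huv).symm
  have hu : ‖u‖ ≤ 1 := by nlinarith [norm_nonneg u, norm_nonneg v]
  have hPv : ‖P v‖ ≤ 1 := (hP.norm_apply_le v).trans (by nlinarith [norm_nonneg u, norm_nonneg v])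
  have htri : ‖P (u + v)‖ ≤ ‖u‖ + ‖P v‖ := by
    rw [map_add]
    exact (norm_add_le _ _).trans (add_le_add_left (hP.norm_apply_le u) _)
  have hpyth := hP.norm_sq_add_norm_one_sub_sq (u + v)
  rw [hunit] at hpyth
  nlinarith [norm_nonneg u, norm_nonneg (P v), norm_nonneg (P (u + v))]

end IsStarProjection

/-- If `P` is an orthogonal projection on a Hilbert space `H`, `U` is unitary,
and `δ = φ + ψ` is a unit vector with `⟨φ, ψ⟩ = 0`, then for every positive integer `T`,
`(1/T) ∑_{t=T}^{2T-1} ‖(1 - P)Uᵗδ‖² ≥ ‖ψ‖² - 3·((1/T) ∑_{t=T}^{2T-1} ‖P Uᵗ ψ‖²)^{1/2}`. -/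
theorem stmt_9
    {H : Type*} [NormedAddCommGroup H] [InnerProductSpace ℂ H] [CompleteSpace H]
    (P : H →L[ℂ] H) (hP_idem : P ∘L P = P) (hP_sa : IsSelfAdjoint P)
    (U : H →L[ℂ] H) (hU : U ∈ unitary (H →L[ℂ] H))
    (φ ψ δ : H) (hδ : δ = φ + ψ) (hδ_unit : ‖δ‖ = 1) (horth : (inner ℂ φ ψ : ℂ) = 0)
    (T : ℕ) (hT : 0 < T) :
    ‖ψ‖ ^ 2 - 3 * Real.sqrt ((1 / (T : ℝ)) * ∑ t ∈ Finset.Ico T (2 * T), ‖P ((U ^ t) ψ)‖ ^ 2) ≤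
      (1 / (T : ℝ)) * ∑ t ∈ Finset.Ico T (2 * T), ‖(1 - P) ((U ^ t) δ)‖ ^ 2 := by
  have hP : IsStarProjection P := ⟨hP_idem, hP_sa⟩
  have hpointwise (t : ℕ) : ‖ψ‖ ^ 2 - 3 * ‖P ((U ^ t) ψ)‖ ≤ ‖(1 - P) ((U ^ t) δ)‖ ^ 2 := by
    have hUt := pow_mem hU t
    rw [← (U ^ t).norm_map_of_mem_unitary hUt ψ, hδ, map_add]
    refine hP.norm_sq_sub_three_mul_le_norm_one_sub_apply_add_sq ?_ ?_
    · rwa [(U ^ t).inner_map_map_of_mem_unitary hUt]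
    · rw [← map_add, ← hδ, (U ^ t).norm_map_of_mem_unitary hUt, hδ_unit]
  have hcard : (#(Ico T (2 * T)) : ℝ) = T := by simp; omega
  have hrms := sum_div_card_le_sqrt_sum_sq_div_card (Ico T (2 * T)) fun t ↦ ‖P ((U ^ t) ψ)‖
  rw [hcard] at hrms
  simp only [one_div_mul_eq_div]
  calc ‖ψ‖ ^ 2 - 3 * √((∑ t ∈ Ico T (2 * T), ‖P ((U ^ t) ψ)‖ ^ 2) / (T : ℝ))
      ≤ ‖ψ‖ ^ 2 - 3 * ((∑ t ∈ Ico T (2 * T), ‖P ((U ^ t) ψ)‖) / (T : ℝ)) := by gcongr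
    _ = (∑ t ∈ Ico T (2 * T), (‖ψ‖ ^ 2 - 3 * ‖P ((U ^ t) ψ)‖)) / (T : ℝ) := by
        rw [sum_sub_distrib, sum_const, ← mul_sum, nsmul_eq_mul, hcard]
        field_simp
    _ ≤ (∑ t ∈ Ico T (2 * T), ‖(1 - P) ((U ^ t) δ)‖ ^ 2) / (T : ℝ) := by
        gcongr with t
        exact hpointwise t
end

section
/- Let H be a Hilbert space, U : H → H a unitary operator, and ψ ∈ H. Suppose there is a bounded measurable function F : [0,2π) → [0,∞) such that ⟨ψ, U^t ψ⟩ = (1/2π)·∫_0^{2π} e^{−itθ}·F(θ) dθ for every t ∈ ℤ. Then for every φ ∈ H, Σ_{t∈ℤ} |⟨φ, U^t ψ⟩|² ≤ (ess sup F)·‖φ‖². -/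
open Filter MeasureTheory ComplexConjugate

/-!
For finitely supported coefficients `c`, the density turns the Gram form of the vectors `Uᵗψ` into
a weighted trigonometric integral, and Parseval's identity bounds it:
`‖∑ c t • Uᵗψ‖² = (1/2π) ∫ |∑ c t e^{-itθ}|² F(θ) dθ ≤ (ess sup F) · ∑ |c t|²`.
So `t ↦ Uᵗψ` is a Bessel sequence with bound `ess sup F`, and the claim follows by duality: for
`S = ∑ |⟪φ, Uᵗψ⟫|²` and `v = ∑ ⟪Uᵗψ, φ⟫ • Uᵗψ` one has `S = ⟪φ, v⟫ ≤ ‖φ‖ ‖v‖ ≤ ‖φ‖ √(ess sup F · S)`.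
-/

theorem tsum_norm_inner_sq_le_of_norm_sum_smul_sq_le {𝕜 E ι : Type*} [RCLike 𝕜]
    [NormedAddCommGroup E] [InnerProductSpace 𝕜 E] (x : ι → E) {M : ℝ} (hM : 0 ≤ M)
    (hx : ∀ (s : Finset ι) (c : ι → 𝕜), ‖∑ t ∈ s, c t • x t‖ ^ 2 ≤ M * ∑ t ∈ s, ‖c t‖ ^ 2)
    (φ : E) : ∑' t, ‖inner 𝕜 φ (x t)‖ ^ 2 ≤ M * ‖φ‖ ^ 2 := by
  refine tsum_le_of_sum_le' (by positivity) fun s => ?_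
  set S := ∑ t ∈ s, ‖inner 𝕜 φ (x t)‖ ^ 2
  set v := ∑ t ∈ s, inner 𝕜 (x t) φ • x t
  have hS0 : 0 ≤ S := by positivity
  have hφv : inner 𝕜 φ v = (S : 𝕜) := by
    rw [inner_sum, RCLike.ofReal_sum]
    refine Finset.sum_congr rfl fun t _ => ?_
    rw [inner_smul_right, ← inner_conj_symm, RCLike.conj_mul, RCLike.ofReal_pow]
  have hv : ‖v‖ ^ 2 ≤ M * S := by
    simpa only [norm_inner_symm] using hx s fun t => inner 𝕜 (x t) φ
  have hS : S ≤ ‖φ‖ * ‖v‖ := by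
    calc S = ‖inner 𝕜 φ v‖ := by rw [hφv, RCLike.norm_ofReal, abs_of_nonneg hS0]
      _ ≤ ‖φ‖ * ‖v‖ := norm_inner_le_norm φ v
  rcases hS0.eq_or_lt with hS0 | hSpos
  · rw [← hS0]; positivity
  · refine le_of_mul_le_mul_right ?_ hSpos
    calc S * S ≤ ‖φ‖ ^ 2 * ‖v‖ ^ 2 := by nlinarith
      _ ≤ M * ‖φ‖ ^ 2 * S := by nlinarith [sq_nonneg ‖φ‖]

theorem norm_exp_neg_I_int_mul (k : ℤ) (θ : ℝ) : ‖Complex.exp (-Complex.I * k * θ)‖ = 1 := by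
  rw [Complex.norm_exp]; simp

theorem integrable_exp_neg_I_int_mul {μ : Measure ℝ} {w : ℝ → ℝ} (hw : Integrable w μ) (k : ℤ) :
    Integrable (fun θ : ℝ => Complex.exp (-Complex.I * k * θ) * w θ) μ :=
  hw.ofReal.bdd_mul (by fun_prop) (.of_forall fun θ => (norm_exp_neg_I_int_mul k θ).le)

theorem integral_exp_neg_I_int_mul_Ico (k : ℤ) :
    ∫ θ in Set.Ico 0 (2 * Real.pi), Complex.exp (-Complex.I * k * θ) =
      if k = 0 then (2 * Real.pi : ℂ) else 0 := by
  rw [integral_Ico_eq_integral_Ioo, ← integral_Ioc_eq_integral_Ioo,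
    ← intervalIntegral.integral_of_le Real.two_pi_pos.le]
  split_ifs with hk
  · simp [hk]
  · have hc : -Complex.I * k ≠ 0 := by simp [hk]
    have hperiod : Complex.exp (-Complex.I * k * (2 * Real.pi : ℝ)) = 1 := by
      rw [show -Complex.I * k * (2 * Real.pi : ℝ) = (-k : ℤ) * (2 * Real.pi * Complex.I) by
        push_cast; ring]
      exact Complex.exp_int_mul_two_pi_mul_I _
    rw [integral_exp_mul_complex hc, hperiod]
    simp

noncomputable def trigPoly (s : Finset ℤ) (c : ℤ → ℂ) (θ : ℝ) : ℂ :=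
  ∑ t ∈ s, c t * Complex.exp (-Complex.I * t * θ)

section TrigPoly

variable (s : Finset ℤ) (c : ℤ → ℂ)

theorem continuous_trigPoly : Continuous (trigPoly s c) := by
  unfold trigPoly; fun_prop

theorem norm_trigPoly_sq_le (θ : ℝ) :
    ‖trigPoly s c θ‖ ^ 2 ≤ (∑ t ∈ s, ‖c t‖) ^ 2 := by
  refine pow_le_pow_left₀ (norm_nonneg _) ((norm_sum_le _ _).trans_eq ?_) 2
  simp only [norm_mul, norm_exp_neg_I_int_mul, mul_one]

theorem conj_trigPoly_mul_trigPoly (θ : ℝ) :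
    conj (trigPoly s c θ) * trigPoly s c θ =
      ∑ p ∈ s, ∑ q ∈ s, conj (c p) * c q * Complex.exp (-Complex.I * ((q - p : ℤ) : ℂ) * θ) := by
  simp only [trigPoly, map_sum, map_mul, ← Complex.exp_conj, Finset.sum_mul_sum]
  refine Finset.sum_congr rfl fun p _ => Finset.sum_congr rfl fun q _ => ?_
  rw [mul_mul_mul_comm, ← Complex.exp_add]
  congr 2
  simp only [map_neg, Complex.conj_I, map_intCast, Complex.conj_ofReal]
  push_cast; ring

theorem integral_norm_trigPoly_sq_mul {μ : Measure ℝ} {w : ℝ → ℝ} (hw : Integrable w μ) :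
    ((∫ θ, ‖trigPoly s c θ‖ ^ 2 * w θ ∂μ : ℝ) : ℂ) =
      ∑ p ∈ s, ∑ q ∈ s, conj (c p) * c q *
        ∫ θ, Complex.exp (-Complex.I * ((q - p : ℤ) : ℂ) * θ) * w θ ∂μ := by
  have hexp_int := integrable_exp_neg_I_int_mul hw
  have hexpand : ∀ θ, ((‖trigPoly s c θ‖ ^ 2 * w θ : ℝ) : ℂ) = ∑ p ∈ s, ∑ q ∈ s,
      conj (c p) * c q * (Complex.exp (-Complex.I * ((q - p : ℤ) : ℂ) * θ) * w θ) := fun θ => by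
    rw [Complex.ofReal_mul, Complex.ofReal_pow, ← Complex.conj_mul', conj_trigPoly_mul_trigPoly,
      Finset.sum_mul]
    simp only [Finset.sum_mul, mul_assoc]
  rw [← integral_complex_ofReal, integral_congr_ae (.of_forall hexpand),
    integral_finsetSum _ fun p _ => integrable_finsetSum _ fun q _ => (hexp_int _).const_mul _]
  refine Finset.sum_congr rfl fun p _ => ?_
  rw [integral_finsetSum _ fun q _ => (hexp_int _).const_mul _]
  simp_rw [integral_const_mul]

theorem integral_norm_trigPoly_sq_Ico :
    ∫ θ in Set.Ico 0 (2 * Real.pi), ‖trigPoly s c θ‖ ^ 2 = 2 * Real.pi * ∑ t ∈ s, ‖c t‖ ^ 2 := by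
  have h := integral_norm_trigPoly_sq_mul s c (w := fun _ => 1)
    (μ := volume.restrict (Set.Ico 0 (2 * Real.pi)))
    (integrableOn_const measure_Ico_lt_top.ne)
  simp only [mul_one, Complex.ofReal_one, integral_exp_neg_I_int_mul_Ico, sub_eq_zero,
    mul_ite, mul_zero, Finset.sum_ite_eq', Finset.sum_ite_mem, Finset.inter_self,
    Complex.conj_mul'] at h
  rw [← Complex.ofReal_inj, h, ← Finset.sum_mul]
  push_cast
  ring

end TrigPoly

theorem inner_zpow_apply_zpow_apply {𝕜 H : Type*} [RCLike 𝕜] [NormedAddCommGroup H]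
    [InnerProductSpace 𝕜 H] [CompleteSpace H] (U : unitary (H →L[𝕜] H)) (x y : H) (p q : ℤ) :
    inner 𝕜 (((U ^ p : unitary (H →L[𝕜] H)) : H →L[𝕜] H) x)
      (((U ^ q : unitary (H →L[𝕜] H)) : H →L[𝕜] H) y) =
      inner 𝕜 x (((U ^ (q - p) : unitary (H →L[𝕜] H)) : H →L[𝕜] H) y) := by
  conv_lhs => rw [← add_sub_cancel p q, zpow_add, Submonoid.coe_mul, mul_apply_eq_comp,
    Unitary.inner_map_map]

def IsSpectralDensity {H : Type*} [NormedAddCommGroup H] [InnerProductSpace ℂ H] [CompleteSpace H]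
    (U : unitary (H →L[ℂ] H)) (ψ : H) (F : ℝ → ℝ) : Prop :=
  ∀ t : ℤ, inner ℂ ψ (((U ^ t : unitary (H →L[ℂ] H)) : H →L[ℂ] H) ψ) =
    (1 / (2 * (Real.pi : ℂ))) *
      ∫ θ in Set.Ico 0 (2 * Real.pi), Complex.exp (-Complex.I * t * θ) * F θ

section SpectralDensity

variable {H : Type*} [NormedAddCommGroup H] [InnerProductSpace ℂ H] [CompleteSpace H]
  {U : unitary (H →L[ℂ] H)} {ψ : H} {F : ℝ → ℝ}

theorem IsSpectralDensity.norm_sum_smul_zpow_apply_sq (hF : IsSpectralDensity U ψ F)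
    (hF_int : IntegrableOn F (Set.Ico 0 (2 * Real.pi))) (s : Finset ℤ) (c : ℤ → ℂ) :
    ‖∑ t ∈ s, c t • ((U ^ t : unitary (H →L[ℂ] H)) : H →L[ℂ] H) ψ‖ ^ 2 =
      (2 * Real.pi)⁻¹ * ∫ θ in Set.Ico 0 (2 * Real.pi), ‖trigPoly s c θ‖ ^ 2 * F θ := by
  set v := ∑ t ∈ s, c t • ((U ^ t : unitary (H →L[ℂ] H)) : H →L[ℂ] H) ψ with hv
  rw [← Complex.ofReal_inj, Complex.ofReal_mul, integral_norm_trigPoly_sq_mul s c hF_int,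
    show ((‖v‖ ^ 2 : ℝ) : ℂ) = inner ℂ v v by exact_mod_cast (inner_self_eq_norm_sq_to_K v).symm,
    hv, sum_inner, Finset.mul_sum]
  refine Finset.sum_congr rfl fun p _ => ?_
  rw [inner_smul_left, inner_sum, Finset.mul_sum, Finset.mul_sum]
  refine Finset.sum_congr rfl fun q _ => ?_
  rw [inner_smul_right, inner_zpow_apply_zpow_apply, hF]
  push_cast
  ring

theorem IsSpectralDensity.norm_sum_smul_zpow_apply_sq_le (hF : IsSpectralDensity U ψ F)
    (hF_int : IntegrableOn F (Set.Ico 0 (2 * Real.pi))) {M : ℝ}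
    (hFM : ∀ᵐ θ ∂volume.restrict (Set.Ico 0 (2 * Real.pi)), F θ ≤ M) (s : Finset ℤ) (c : ℤ → ℂ) :
    ‖∑ t ∈ s, c t • ((U ^ t : unitary (H →L[ℂ] H)) : H →L[ℂ] H) ψ‖ ^ 2 ≤
      M * ∑ t ∈ s, ‖c t‖ ^ 2 := by
  have hg_meas : AEStronglyMeasurable (fun θ => ‖trigPoly s c θ‖ ^ 2)
      (volume.restrict (Set.Ico 0 (2 * Real.pi))) := by
    have := continuous_trigPoly s c; fun_prop
  have hg_bound : ∀ᵐ θ ∂volume.restrict (Set.Ico 0 (2 * Real.pi)),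
      ‖‖trigPoly s c θ‖ ^ 2‖ ≤ (∑ t ∈ s, ‖c t‖) ^ 2 :=
    .of_forall fun θ => by rw [norm_pow, norm_norm]; exact norm_trigPoly_sq_le s c θ
  have hgF_int := hF_int.bdd_mul hg_meas hg_bound
  have hgM_int := (IntegrableOn.of_bound measure_Ico_lt_top hg_meas _ hg_bound).mul_const M
  rw [hF.norm_sum_smul_zpow_apply_sq hF_int]
  calc (2 * Real.pi)⁻¹ * ∫ θ in Set.Ico 0 (2 * Real.pi), ‖trigPoly s c θ‖ ^ 2 * F θ
      ≤ (2 * Real.pi)⁻¹ * ∫ θ in Set.Ico 0 (2 * Real.pi), ‖trigPoly s c θ‖ ^ 2 * M := by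
        refine mul_le_mul_of_nonneg_left (integral_mono_ae hgF_int hgM_int ?_) (by positivity)
        exact hFM.mono fun θ hθ => mul_le_mul_of_nonneg_left hθ (sq_nonneg _)
    _ = M * ∑ t ∈ s, ‖c t‖ ^ 2 := by
        rw [integral_mul_const, integral_norm_trigPoly_sq_Ico]
        field_simp

end SpectralDensity

/-- Let `U` be a unitary on a Hilbert space `H` and `ψ ∈ H`.  If there is a
bounded measurable `F : [0,2π) → [0,∞)` with
`⟨ψ, Uᵗψ⟩ = (1/2π)∫₀^{2π} e^{-itθ} F(θ) dθ` for all `t ∈ ℤ`, then for every `φ ∈ H`,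
`∑_{t∈ℤ} |⟨φ, Uᵗψ⟩|² ≤ (ess sup F)·‖φ‖²`. -/
theorem stmt_10
    {H : Type*} [NormedAddCommGroup H] [InnerProductSpace ℂ H] [CompleteSpace H]
    (U : unitary (H →L[ℂ] H)) (ψ : H)
    (F : ℝ → ℝ) (hF_meas : Measurable F) (hF_nonneg : ∀ θ : ℝ, 0 ≤ F θ)
    (hF_bdd : BddAbove (Set.range F))
    (hFourier : ∀ t : ℤ,
      (inner ℂ ψ (((U ^ t : unitary (H →L[ℂ] H)) : H →L[ℂ] H) ψ) : ℂ) =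
        (1 / (2 * (Real.pi : ℂ))) *
          ∫ θ in Set.Ico (0 : ℝ) (2 * Real.pi),
            Complex.exp (-Complex.I * (t : ℂ) * (θ : ℂ)) * (F θ : ℂ)) :
    ∀ φ : H,
      ∑' t : ℤ, ‖(inner ℂ φ (((U ^ t : unitary (H →L[ℂ] H)) : H →L[ℂ] H) ψ) : ℂ)‖ ^ 2 ≤
        essSup F (volume.restrict (Set.Ico (0 : ℝ) (2 * Real.pi))) * ‖φ‖ ^ 2 := by
  intro φ
  set μ := volume.restrict (Set.Ico (0 : ℝ) (2 * Real.pi))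
  obtain ⟨C, hC⟩ := hF_bdd
  have hF_int : IntegrableOn F (Set.Ico 0 (2 * Real.pi)) :=
    .of_bound measure_Ico_lt_top hF_meas.aestronglyMeasurable C
      (.of_forall fun θ => (Real.norm_of_nonneg (hF_nonneg θ)).trans_le (hC ⟨θ, rfl⟩))
  have hFM : ∀ᵐ θ ∂μ, F θ ≤ essSup F μ :=
    ae_le_essSup (isBoundedUnder_of ⟨C, fun θ => hC ⟨θ, rfl⟩⟩)
  have hM : 0 ≤ essSup F μ := by
    have : (ae μ).NeBot := ae_neBot.2 (by simp [μ, Measure.restrict_eq_zero, Real.pi_pos])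
    obtain ⟨θ, hθ⟩ := hFM.exists
    exact (hF_nonneg θ).trans hθ
  exact tsum_norm_inner_sq_le_of_norm_sum_smul_sq_le _ hM
    (IsSpectralDensity.norm_sum_smul_zpow_apply_sq_le hFourier hF_int hFM) φ
end

section
/- If (k_m)_{m≥1} is a strictly increasing sequence of positive integers, then the real number Σ_{m=1}^∞ 2^{−(k_m)!} is irrational. -/
/-!
The sum is a Liouville number. With `b = 2 ^ (k m)!`, the partial sum up to `m` is a fraction with
denominator `b`, and the remaining tail is positive and, since the exponents increase strictly, at
most `2 * 2 ^ (-(k (m + 1))!) ≤ 2 * b ^ (-(k m + 1))`. As `k m → ∞`, this beats every power of `b`.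
-/

open Filter Finset

section
variable {e : ℕ → ℕ}

lemma inv_two_pow_le_of_strictMono (he : StrictMono e) (j : ℕ) :
    ((2 : ℝ) ^ e j)⁻¹ ≤ ((2 : ℝ) ^ e 0)⁻¹ * 2⁻¹ ^ j := by
  rw [← inv_pow, ← inv_pow, ← pow_add]
  exact pow_le_pow_of_le_one (by norm_num) (by norm_num)
    (by simpa [add_comm] using he.add_le_nat j 0)

lemma summable_mul_inv_two_pow (c : ℝ) : Summable fun j : ℕ ↦ c * 2⁻¹ ^ j :=
  (summable_geometric_of_lt_one (by norm_num) (by norm_num)).mul_left c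

lemma summable_inv_two_pow (he : StrictMono e) : Summable fun j ↦ ((2 : ℝ) ^ e j)⁻¹ :=
  (summable_mul_inv_two_pow _).of_nonneg_of_le (fun _ ↦ by positivity)
    (inv_two_pow_le_of_strictMono he)

lemma tsum_inv_two_pow_le (he : StrictMono e) :
    ∑' j, ((2 : ℝ) ^ e j)⁻¹ ≤ 2 * ((2 : ℝ) ^ e 0)⁻¹ :=
  calc ∑' j, ((2 : ℝ) ^ e j)⁻¹ ≤ ∑' j, ((2 : ℝ) ^ e 0)⁻¹ * 2⁻¹ ^ j :=
        (summable_inv_two_pow he).tsum_le_tsum (inv_two_pow_le_of_strictMono he)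
          (summable_mul_inv_two_pow _)
    _ = 2 * ((2 : ℝ) ^ e 0)⁻¹ := by rw [tsum_mul_left, tsum_geometric_inv_two, mul_comm]

lemma sum_range_inv_two_pow_eq_div (he : Monotone e) (m : ℕ) :
    ∑ j ∈ range (m + 1), ((2 : ℝ) ^ e j)⁻¹ =
      ((∑ j ∈ range (m + 1), 2 ^ (e m - e j) : ℤ) : ℝ) / ((2 ^ e m : ℤ) : ℝ) := by
  rw [eq_div_iff (by positivity), sum_mul]
  push_cast
  refine sum_congr rfl fun j hj ↦ ?_
  rw [pow_sub₀ _ two_ne_zero (he (Nat.lt_succ_iff.mp (mem_range.mp hj)))]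
  field_simp

theorem liouville_tsum_inv_two_pow (he : StrictMono e)
    (hgap : ∀ n, ∀ᶠ m in atTop, n * e m + 1 < e (m + 1)) :
    Liouville (∑' j, ((2 : ℝ) ^ e j)⁻¹) := by
  intro n
  obtain ⟨m, hm, hm_pos⟩ := ((hgap n).and (eventually_ge_atTop 1)).exists
  have he_tail : StrictMono fun j ↦ e (j + (m + 1)) := he.comp add_left_strictMono
  set T := ∑' j, ((2 : ℝ) ^ e (j + (m + 1)))⁻¹
  have hT_pos : 0 < T :=
    (summable_inv_two_pow he_tail).tsum_pos (fun _ ↦ by positivity) 0 (by positivity)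
  have hT_le : T ≤ 2 * ((2 : ℝ) ^ e (m + 1))⁻¹ := by simpa using tsum_inv_two_pow_le he_tail
  have hsplit := (summable_inv_two_pow he).sum_add_tsum_nat_add (m + 1)
  rw [sum_range_inv_two_pow_eq_div he.monotone] at hsplit
  refine ⟨∑ j ∈ range (m + 1), 2 ^ (e m - e j), 2 ^ e m, ?_, ?_, ?_⟩
  · exact one_lt_pow₀ one_lt_two (by have := he.le_apply (x := m); omega)
  · rw [← hsplit]
    exact ne_of_gt (lt_add_of_pos_right _ hT_pos)
  · rw [← hsplit, add_sub_cancel_left, abs_of_pos hT_pos]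
    refine hT_le.trans_lt ?_
    push_cast
    calc 2 * ((2 : ℝ) ^ e (m + 1))⁻¹
        = 2 ^ (n * e m + 1) / 2 ^ e (m + 1) / ((2 : ℝ) ^ e m) ^ n := by
          rw [pow_succ, mul_comm n, pow_mul]
          field_simp
      _ < 1 / ((2 : ℝ) ^ e m) ^ n := by
          gcongr
          exact (div_lt_one (by positivity)).2 (pow_lt_pow_right₀ one_lt_two hm)

end

open Nat in
lemma eventually_mul_factorial_add_one_lt {k : ℕ → ℕ} (hk : StrictMono k) (n : ℕ) :
    ∀ᶠ m in atTop, n * (k m)! + 1 < (k (m + 1))! := by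
  filter_upwards [eventually_ge_atTop (n + 1)] with m hm
  have hkm : n + 1 ≤ k m := hm.trans hk.le_apply
  have hstep : (k m + 1)! ≤ (k (m + 1))! := factorial_le (hk (lt_add_one m))
  have hfact_pos := factorial_pos (k m)
  rw [factorial_succ] at hstep
  nlinarith

/-- If `(k_m)` is a strictly increasing sequence of positive integers, then
`∑_m 2^{-(k_m)!}` is irrational. -/
theorem stmt_17 (k : ℕ → ℕ) (hk : StrictMono k) (hk_pos : ∀ m, 0 < k m) :
    Irrational (∑' m : ℕ, ((2 : ℝ) ^ Nat.factorial (k m))⁻¹) :=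
  (liouville_tsum_inv_two_pow (fun _ _ hab ↦ (Nat.factorial_lt (hk_pos _)).2 (hk hab))
    (eventually_mul_factorial_add_one_lt hk)).irrational
end
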